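/- arXiv:0712.1987 — 10 statements merged into one kernel-verified Lean document; each statement's English description precedes it below -/
import Mathlib

section
/- Let n ≥ 1 be a natural number, let μ ≥ 1, let σ₁² > 0, σ₂² > 0 and P > 0 be real numbers, and define P* by: P* = 0 if σ₂² < μσ₁²; P* = (σ₂² − μσ₁²)/(μ − 1) if μσ₁² ≤ σ₂² < μσ₁² + (μ − 1)P; and P* = P if σ₂² ≥ μσ₁² + (μ − 1)P. Then for every vector (λ₁, …, λₙ) of nonnegative reals with λ₁ + ⋯ + λₙ ≤ nP, one has ∑ᵢ [ (1/2)·log(λᵢ + σ₁²) − (μ/2)·log(λᵢ + σ₂²) ] ≤ n·[ (1/2)·log(P* + σ₁²) − (μ/2)·log(P* + σ₂²) ]. In particular, the constant vector λᵢ = P* maximizes the left-hand side subject to the constraints. -/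
open Real Finset

private lemma pointwise_wf (μ s1 s2 Q c : ℝ) (hμ : 1 ≤ μ) (hs1 : 0 < s1) (hs2 : 0 < s2)
    (hQ : 0 ≤ Q) (hK : 0 ≤ (Q + s2) - μ * (Q + s1) ∨ Q = 0)
    (hc : c = max 0 (((Q + s2) - μ * (Q + s1)) / (2 * (Q + s1) * (Q + s2))))
    (x : ℝ) (hx : 0 ≤ x) :
    (1/2) * Real.log (x + s1) - (μ/2) * Real.log (x + s2) ≤
      (1/2) * Real.log (Q + s1) - (μ/2) * Real.log (Q + s2) + c * (x - Q) := by
  have hA : 0 < Q + s1 := by linarith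
  have hB : 0 < Q + s2 := by linarith
  set g : ℝ → ℝ := fun x => (1/2) * Real.log (x + s1) - (μ/2) * Real.log (x + s2) - c * x
    with hg
  -- derivative of g
  have hder : ∀ y : ℝ, 0 ≤ y →
      HasDerivAt g ((1/2) * (y + s1)⁻¹ - (μ/2) * (y + s2)⁻¹ - c) y := by
    intro y hy
    have h1 : 0 < y + s1 := by linarith
    have h2 : 0 < y + s2 := by linarith
    have d1 : HasDerivAt (fun z : ℝ => Real.log (z + s1)) (y + s1)⁻¹ y := by
      simpa [Function.comp_def] using (Real.hasDerivAt_log h1.ne').comp y ((hasDerivAt_id y).add_const s1)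
    have d2 : HasDerivAt (fun z : ℝ => Real.log (z + s2)) (y + s2)⁻¹ y := by
      simpa [Function.comp_def] using (Real.hasDerivAt_log h2.ne').comp y ((hasDerivAt_id y).add_const s2)
    have d3 : HasDerivAt (fun z : ℝ => c * z) c y := by
      simpa using (hasDerivAt_id y).const_mul c
    exact ((d1.const_mul (1/2)).sub (d2.const_mul (μ/2))).sub d3
  -- continuity of g on [0, ∞)
  have cont : ContinuousOn g (Set.Ici (0:ℝ)) := by
    intro y hy
    exact ((hder y hy).differentiableAt).continuousAt.continuousWithinAt
  -- signs of the derivative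
  have keyA : ∀ y ∈ Set.Ioo (0:ℝ) Q, 0 ≤ (1/2) * (y + s1)⁻¹ - (μ/2) * (y + s2)⁻¹ - c := by
    intro y hy
    obtain ⟨hy0, hyQ⟩ := hy
    have ha : 0 < y + s1 := by linarith
    have hb : 0 < y + s2 := by linarith
    have hKK : 0 ≤ (Q + s2) - μ * (Q + s1) := by
      rcases hK with h | h
      · exact h
      · exfalso; rw [h] at hyQ; linarith
    have hcc : c = ((Q + s2) - μ * (Q + s1)) / (2 * (Q + s1) * (Q + s2)) := by
      rw [hc]
      exact max_eq_right (by positivity)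
    have hnum : (Q + s2) - μ * (Q + s1) ≤ (y + s2) - μ * (y + s1) := by nlinarith
    have heq : (1/2) * (y + s1)⁻¹ - (μ/2) * (y + s2)⁻¹ =
        ((y + s2) - μ * (y + s1)) / (2 * (y + s1) * (y + s2)) := by
      field_simp
    rw [heq, hcc, sub_nonneg, div_le_div_iff₀ (by positivity) (by positivity)]
    nlinarith [mul_le_mul hnum (by nlinarith : 2 * (y + s1) * (y + s2) ≤ 2 * (Q + s1) * (Q + s2)) (by positivity) (le_trans hKK hnum)]
  have keyB : ∀ y ∈ Set.Ioi Q, (1/2) * (y + s1)⁻¹ - (μ/2) * (y + s2)⁻¹ - c ≤ 0 := by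
    intro y hy
    have hyQ : Q < y := hy
    have ha : 0 < y + s1 := by linarith
    have hb : 0 < y + s2 := by linarith
    have heq : (1/2) * (y + s1)⁻¹ - (μ/2) * (y + s2)⁻¹ =
        ((y + s2) - μ * (y + s1)) / (2 * (y + s1) * (y + s2)) := by
      field_simp
    rw [sub_nonpos, heq]
    have hnum : (y + s2) - μ * (y + s1) ≤ (Q + s2) - μ * (Q + s1) := by nlinarith
    rcases le_or_gt ((y + s2) - μ * (y + s1)) 0 with h0 | h0
    · have : ((y + s2) - μ * (y + s1)) / (2 * (y + s1) * (y + s2)) ≤ 0 :=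
        div_nonpos_of_nonpos_of_nonneg h0 (by positivity)
      calc ((y + s2) - μ * (y + s1)) / (2 * (y + s1) * (y + s2)) ≤ 0 := this
        _ ≤ c := by rw [hc]; exact le_max_left _ _
    · have h1 : ((y + s2) - μ * (y + s1)) / (2 * (y + s1) * (y + s2)) ≤
          ((Q + s2) - μ * (Q + s1)) / (2 * (Q + s1) * (Q + s2)) := by
        rw [div_le_div_iff₀ (by positivity) (by positivity)]
        nlinarith [mul_le_mul hnum (by nlinarith : 2 * (Q + s1) * (Q + s2) ≤ 2 * (y + s1) * (y + s2)) (by positivity) (le_of_lt (lt_of_lt_of_le h0 hnum))]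
      calc ((y + s2) - μ * (y + s1)) / (2 * (y + s1) * (y + s2)) ≤
            ((Q + s2) - μ * (Q + s1)) / (2 * (Q + s1) * (Q + s2)) := h1
        _ ≤ c := by rw [hc]; exact le_max_right _ _
  -- monotone on [0, Q]
  have mono : MonotoneOn g (Set.Icc 0 Q) := by
    apply monotoneOn_of_deriv_nonneg (convex_Icc 0 Q)
      (cont.mono (Set.Icc_subset_Ici_self))
    · intro y hy
      rw [interior_Icc] at hy
      exact ((hder y (le_of_lt hy.1)).differentiableAt).differentiableWithinAt
    · intro y hy
      rw [interior_Icc] at hy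
      rw [(hder y (le_of_lt hy.1)).deriv]
      exact keyA y hy
  have anti : AntitoneOn g (Set.Ici Q) := by
    apply antitoneOn_of_deriv_nonpos (convex_Ici Q)
      (cont.mono (Set.Ici_subset_Ici.mpr hQ))
    · intro y hy
      rw [interior_Ici] at hy
      exact ((hder y (le_of_lt (lt_of_le_of_lt hQ hy))).differentiableAt).differentiableWithinAt
    · intro y hy
      rw [interior_Ici] at hy
      rw [(hder y (le_of_lt (lt_of_le_of_lt hQ hy))).deriv]
      exact keyB y hy
  -- pointwise bound
  have hgx : g x ≤ g Q := by
    rcases le_total x Q with h | h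
    · exact mono ⟨hx, h⟩ ⟨hQ, le_refl Q⟩ h
    · exact anti (Set.self_mem_Ici) h h
  have : (1/2) * Real.log (x + s1) - (μ/2) * Real.log (x + s2) - c * x ≤
      (1/2) * Real.log (Q + s1) - (μ/2) * Real.log (Q + s2) - c * Q := hgx
  linarith [this]

/-- Corollary 1 (eigenvalue form): for weight `μ ≥ 1`, the constant vector `λᵢ = P*`
maximizes `∑ᵢ (1/2)·log(λᵢ + σ₁²) − (μ/2)·log(λᵢ + σ₂²)` over nonnegative `λᵢ`
with `∑ᵢ λᵢ ≤ n·P`, where `P*` is the piecewise waterfilling level. -/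
theorem stmt_0 (n : ℕ) (hn : 1 ≤ n) (μ s1 s2 P Pstar : ℝ)
    (hμ : 1 ≤ μ) (hs1 : 0 < s1) (hs2 : 0 < s2) (hP : 0 < P)
    (hPstar : Pstar =
      if s2 < μ * s1 then 0
      else if s2 < μ * s1 + (μ - 1) * P then (s2 - μ * s1) / (μ - 1)
      else P)
    (lam : Fin n → ℝ) (hlam : ∀ i, 0 ≤ lam i)
    (hsum : ∑ i, lam i ≤ n * P) :
    ∑ i, ((1 / 2) * Real.log (lam i + s1) - (μ / 2) * Real.log (lam i + s2)) ≤
      n * ((1 / 2) * Real.log (Pstar + s1) - (μ / 2) * Real.log (Pstar + s2)) := by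
  set c := max 0 (((Pstar + s2) - μ * (Pstar + s1)) / (2 * (Pstar + s1) * (Pstar + s2))) with hc
  -- basic facts about Pstar
  have hfacts : 0 ≤ Pstar ∧ Pstar ≤ P ∧
      (0 ≤ (Pstar + s2) - μ * (Pstar + s1) ∨ Pstar = 0) ∧
      (0 < (Pstar + s2) - μ * (Pstar + s1) → Pstar = P) := by
    rw [hPstar]
    split_ifs with h1 h2
    · refine ⟨le_refl 0, le_of_lt hP, Or.inr rfl, ?_⟩
      intro h; exfalso; simp at h; linarith
    · push_neg at h1
      have hμ1 : 1 < μ := by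
        rcases eq_or_lt_of_le hμ with h | h
        · exfalso; rw [← h] at h1 h2; simp at h1 h2; linarith
        · exact h
      have hnum : 0 ≤ s2 - μ * s1 := by linarith
      have hden : 0 < μ - 1 := by linarith
      have hle : (s2 - μ * s1) / (μ - 1) ≤ P := by
        rw [div_le_iff₀ hden]; nlinarith
      have hzero : ((s2 - μ * s1) / (μ - 1) + s2) - μ * ((s2 - μ * s1) / (μ - 1) + s1) = 0 := by
        field_simp
        ring
      refine ⟨by positivity, hle, Or.inl (le_of_eq hzero.symm), ?_⟩
      intro h; exfalso; rw [hzero] at h; exact lt_irrefl 0 h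
    · push_neg at h1 h2
      refine ⟨le_of_lt hP, le_refl P, Or.inl (by nlinarith), fun _ => rfl⟩
  obtain ⟨hQ0, hQP, hK, hEq⟩ := hfacts
  have hc0 : 0 ≤ c := le_max_left _ _
  have hcP : c * (P - Pstar) = 0 := by
    rcases le_or_gt ((Pstar + s2) - μ * (Pstar + s1)) 0 with h | h
    · have : c = 0 := by
        rw [hc]
        exact max_eq_left (div_nonpos_of_nonpos_of_nonneg h (by positivity))
      rw [this, zero_mul]
    · rw [hEq h, sub_self, mul_zero]
  -- pointwise bound for each i
  have hpt : ∀ i, (1/2) * Real.log (lam i + s1) - (μ/2) * Real.log (lam i + s2) ≤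
      (1/2) * Real.log (Pstar + s1) - (μ/2) * Real.log (Pstar + s2) + c * (lam i - Pstar) :=
    fun i => pointwise_wf μ s1 s2 Pstar c hμ hs1 hs2 hQ0 hK hc (lam i) (hlam i)
  calc ∑ i, ((1/2) * Real.log (lam i + s1) - (μ/2) * Real.log (lam i + s2))
      ≤ ∑ i, ((1/2) * Real.log (Pstar + s1) - (μ/2) * Real.log (Pstar + s2)
          + c * (lam i - Pstar)) := Finset.sum_le_sum fun i _ => hpt i
    _ = n * ((1/2) * Real.log (Pstar + s1) - (μ/2) * Real.log (Pstar + s2))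
          + c * ((∑ i, lam i) - n * Pstar) := by
        rw [Finset.sum_add_distrib, Finset.sum_const, Finset.card_univ, Fintype.card_fin,
          ← Finset.mul_sum, Finset.sum_sub_distrib, Finset.sum_const, Finset.card_univ,
          Fintype.card_fin]
        push_cast
        ring
    _ ≤ n * ((1/2) * Real.log (Pstar + s1) - (μ/2) * Real.log (Pstar + s2)) := by
        have h1 : c * ((∑ i, lam i) - n * Pstar) ≤ c * (n * P - n * Pstar) :=
          mul_le_mul_of_nonneg_left (by linarith) hc0
        have h2 : c * ((n:ℝ) * P - n * Pstar) = n * (c * (P - Pstar)) := by ring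
        rw [h2, hcP, mul_zero] at h1
        linarith
end

section
/- Let n ≥ 1 be a natural number, let μ < 1 be a real number, let 0 < σ₁² ≤ σ₂² and P > 0 be real numbers. Then for every vector (λ₁, …, λₙ) of nonnegative reals with λ₁ + ⋯ + λₙ ≤ nP, one has ∑ᵢ [ (1/2)·log(λᵢ + σ₁²) − (μ/2)·log(λᵢ + σ₂²) ] ≤ n·[ (1/2)·log(P + σ₁²) − (μ/2)·log(P + σ₂²) ]. In particular, the constant vector λᵢ = P maximizes the left-hand side subject to the constraints. -/
open Real Finset

section aux

variable {μ s1 s2 : ℝ}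

private lemma aux_hasDerivAt (hs1 : 0 < s1) (hs12 : s1 ≤ s2) {x : ℝ} (hx : 0 < x) :
    HasDerivAt (fun x => (1 / 2) * Real.log (x + s1) - (μ / 2) * Real.log (x + s2))
      ((1 / 2) * (x + s1)⁻¹ - (μ / 2) * (x + s2)⁻¹) x := by
  have h1 : (0:ℝ) < x + s1 := by linarith
  have h2 : (0:ℝ) < x + s2 := by linarith
  have d1 : HasDerivAt (fun x : ℝ => Real.log (x + s1)) ((x + s1)⁻¹) x := by
    simpa using (((hasDerivAt_id x).add_const s1).log h1.ne')
  have d2 : HasDerivAt (fun x : ℝ => Real.log (x + s2)) ((x + s2)⁻¹) x := by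
    simpa using (((hasDerivAt_id x).add_const s2).log h2.ne')
  exact ((d1.const_mul (1/2 : ℝ)).sub (d2.const_mul (μ/2 : ℝ)))

private lemma aux_hasDerivAt' (hs1 : 0 < s1) (hs12 : s1 ≤ s2) {x : ℝ} (hx : 0 < x) :
    HasDerivAt (fun x : ℝ => (1 / 2) * (x + s1)⁻¹ - (μ / 2) * (x + s2)⁻¹)
      ((1 / 2) * (-1 / (x + s1) ^ 2) - (μ / 2) * (-1 / (x + s2) ^ 2)) x := by
  have h1 : (0:ℝ) < x + s1 := by linarith
  have h2 : (0:ℝ) < x + s2 := by linarith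
  have d1 : HasDerivAt (fun x : ℝ => (x + s1)⁻¹) (-1 / (x + s1) ^ 2) x := by
    simpa [Pi.inv_def] using (((hasDerivAt_id x).add_const s1).inv h1.ne')
  have d2 : HasDerivAt (fun x : ℝ => (x + s2)⁻¹) (-1 / (x + s2) ^ 2) x := by
    simpa [Pi.inv_def] using (((hasDerivAt_id x).add_const s2).inv h2.ne')
  exact ((d1.const_mul (1/2 : ℝ)).sub (d2.const_mul (μ/2 : ℝ)))

private lemma aux_cont (hs1 : 0 < s1) (hs12 : s1 ≤ s2) :
    ContinuousOn (fun x => (1 / 2) * Real.log (x + s1) - (μ / 2) * Real.log (x + s2))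
      (Set.Ici (0:ℝ)) := by
  intro x hx
  have hx' : (0:ℝ) ≤ x := hx
  have h1 : (0:ℝ) < x + s1 := by linarith
  have h2 : (0:ℝ) < x + s2 := by linarith
  have c1 : ContinuousAt (fun x : ℝ => Real.log (x + s1)) x :=
    (continuousAt_id.add continuousAt_const).log h1.ne'
  have c2 : ContinuousAt (fun x : ℝ => Real.log (x + s2)) x :=
    (continuousAt_id.add continuousAt_const).log h2.ne'
  exact ((continuousAt_const.mul c1).sub (continuousAt_const.mul c2)).continuousWithinAt

private lemma aux_concave (hμ : μ < 1) (hs1 : 0 < s1) (hs12 : s1 ≤ s2) :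
    ConcaveOn ℝ (Set.Ici (0:ℝ))
      (fun x => (1 / 2) * Real.log (x + s1) - (μ / 2) * Real.log (x + s2)) := by
  have hint : interior (Set.Ici (0:ℝ)) = Set.Ioi (0:ℝ) := interior_Ici
  refine concaveOn_of_hasDerivWithinAt2_nonpos
    (f' := fun x => (1 / 2) * (x + s1)⁻¹ - (μ / 2) * (x + s2)⁻¹)
    (f'' := fun x => (1 / 2) * (-1 / (x + s1) ^ 2) - (μ / 2) * (-1 / (x + s2) ^ 2))
    (convex_Ici 0) (aux_cont hs1 hs12) ?_ ?_ ?_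
  · intro x hx
    rw [hint] at hx
    exact (aux_hasDerivAt hs1 hs12 hx).hasDerivWithinAt
  · intro x hx
    rw [hint] at hx
    exact (aux_hasDerivAt' hs1 hs12 hx).hasDerivWithinAt
  · intro x hx
    rw [hint] at hx
    have hx' : (0:ℝ) < x := hx
    have h1 : (0:ℝ) < x + s1 := by linarith
    have h2 : (0:ℝ) < x + s2 := by linarith
    have h1s : (0:ℝ) < (x + s1)^2 := by positivity
    have h2s : (0:ℝ) < (x + s2)^2 := by positivity
    have key : μ / (x + s2)^2 ≤ 1 / (x + s1)^2 := by
      rw [div_le_div_iff₀ h2s h1s]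
      nlinarith
    show (1 / 2) * (-1 / (x + s1) ^ 2) - (μ / 2) * (-1 / (x + s2) ^ 2) ≤ 0
    have e : (1 / 2) * (-1 / (x + s1) ^ 2) - (μ / 2) * (-1 / (x + s2) ^ 2)
        = (μ / (x + s2)^2 - 1 / (x + s1)^2) / 2 := by ring
    rw [e]
    linarith

private lemma aux_mono (hμ : μ < 1) (hs1 : 0 < s1) (hs12 : s1 ≤ s2) :
    MonotoneOn (fun x => (1 / 2) * Real.log (x + s1) - (μ / 2) * Real.log (x + s2))
      (Set.Ici (0:ℝ)) := by
  have hint : interior (Set.Ici (0:ℝ)) = Set.Ioi (0:ℝ) := interior_Ici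
  apply monotoneOn_of_deriv_nonneg (convex_Ici 0) (aux_cont hs1 hs12)
  · rw [hint]
    intro x hx
    exact (aux_hasDerivAt hs1 hs12 hx).differentiableAt.differentiableWithinAt
  · rw [hint]
    intro x hx
    have hx' : (0:ℝ) < x := hx
    rw [(aux_hasDerivAt hs1 hs12 hx').deriv]
    have h1 : (0:ℝ) < x + s1 := by linarith
    have h2 : (0:ℝ) < x + s2 := by linarith
    have e1 : μ / 2 * (x + s2)⁻¹ = μ / (2 * (x + s2)) := by
      field_simp
    have e2 : (1:ℝ) / 2 * (x + s1)⁻¹ = 1 / (2 * (x + s1)) := by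
      field_simp
    have key : μ / (2 * (x + s2)) ≤ 1 / (2 * (x + s1)) := by
      rw [div_le_div_iff₀ (by positivity) (by positivity)]
      nlinarith
    rw [sub_nonneg, e1, e2]
    exact key

end aux

/-- Corollary 2 (eigenvalue form): for weight `μ < 1` and `0 < σ₁² ≤ σ₂²`, the constant
vector `λᵢ = P` maximizes `∑ᵢ (1/2)·log(λᵢ + σ₁²) − (μ/2)·log(λᵢ + σ₂²)` over
nonnegative `λᵢ` with `∑ᵢ λᵢ ≤ n·P`. -/
theorem stmt_1 (n : ℕ) (hn : 1 ≤ n) (μ s1 s2 P : ℝ)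
    (hμ : μ < 1) (hs1 : 0 < s1) (hs12 : s1 ≤ s2) (hP : 0 < P)
    (lam : Fin n → ℝ) (hlam : ∀ i, 0 ≤ lam i)
    (hsum : ∑ i, lam i ≤ n * P) :
    ∑ i, ((1 / 2) * Real.log (lam i + s1) - (μ / 2) * Real.log (lam i + s2)) ≤
      n * ((1 / 2) * Real.log (P + s1) - (μ / 2) * Real.log (P + s2)) := by
  set f : ℝ → ℝ := fun x => (1 / 2) * Real.log (x + s1) - (μ / 2) * Real.log (x + s2) with hf
  have hn0 : (0:ℝ) < n := by exact_mod_cast hn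
  have hwsum : ∑ _i : Fin n, (n:ℝ)⁻¹ = 1 := by
    simp [Finset.card_univ]
    field_simp
  have jensen := (aux_concave hμ hs1 hs12).le_map_sum (t := Finset.univ)
    (w := fun _ : Fin n => (n:ℝ)⁻¹) (p := lam)
    (fun i _ => by positivity) hwsum
    (fun i _ => hlam i)
  have hS0 : (0:ℝ) ≤ ∑ i, lam i := Finset.sum_nonneg fun i _ => hlam i
  have havg_mem : (∑ i, (n:ℝ)⁻¹ • lam i) ∈ Set.Ici (0:ℝ) := by
    rw [Set.mem_Ici, ← Finset.smul_sum, smul_eq_mul]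
    exact mul_nonneg (by positivity) hS0
  have havg_le : (∑ i, (n:ℝ)⁻¹ • lam i) ≤ P := by
    rw [← Finset.smul_sum, smul_eq_mul, inv_mul_le_iff₀ hn0]
    linarith [hsum]
  have hmono := aux_mono (μ := μ) hμ hs1 hs12 havg_mem (Set.mem_Ici.mpr hP.le) havg_le
  have step : (∑ i, (n:ℝ)⁻¹ • f (lam i)) ≤ f P := le_trans jensen hmono
  have heq : ∑ i, f (lam i) = n * ∑ i, (n:ℝ)⁻¹ • f (lam i) := by
    rw [Finset.mul_sum]
    refine Finset.sum_congr rfl fun i _ => ?_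
    rw [smul_eq_mul, ← mul_assoc, mul_inv_cancel₀ hn0.ne', one_mul]
  calc ∑ i, f (lam i) = n * ∑ i, (n:ℝ)⁻¹ • f (lam i) := heq
    _ ≤ n * f P := by
        exact mul_le_mul_of_nonneg_left step hn0.le
end

section
/- For parameters a ≥ 0, σ > 0 and ρ ∈ [0,1), define f(p₁,p₂) = 1 + a·p₂ + p₁ − (p₁+ρσ)²/(p₁+σ²). Then the function (p₁,p₂) ↦ log f(p₁,p₂) is concave on the convex set {(p₁,p₂) : p₁ ≥ 0, p₂ ≥ 0} (where f is strictly positive). -/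
open Real Set

lemma concaveOn_log_comp {E : Type*} [AddCommGroup E] [Module ℝ E] {s : Set E} {f : E → ℝ}
    (hf : ConcaveOn ℝ s f) (hpos : ∀ x ∈ s, 0 < f x) :
    ConcaveOn ℝ s (fun x => Real.log (f x)) := by
  refine ⟨hf.1, fun x hx y hy a b ha hb hab => ?_⟩
  have hx' := hpos x hx
  have hy' := hpos y hy
  have hcomb : 0 < a • f x + b • f y := by
    simp only [smul_eq_mul]
    rcases lt_or_ge 0 a with h | h
    · nlinarith
    · have ha0 : a = 0 := le_antisymm h ha
      subst ha0
      have hb1 : b = 1 := by linarith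
      subst hb1
      simpa using hy'
  calc a • Real.log (f x) + b • Real.log (f y)
      ≤ Real.log (a • f x + b • f y) :=
        strictConcaveOn_log_Ioi.concaveOn.2 hx' hy' ha hb hab
    _ ≤ Real.log (f (a • x + b • y)) :=
        Real.log_le_log hcomb (hf.2 hx hy ha hb hab)

/-- Concavity of `log f(p₁,p₂)` on the nonnegative quadrant, where
`f(p₁,p₂) = 1 + a·p₂ + p₁ − (p₁+ρσ)²/(p₁+σ²)`. -/
theorem stmt_4 (a σ ρ : ℝ) (ha : 0 ≤ a) (hσ : 0 < σ) (hρ0 : 0 ≤ ρ) (hρ1 : ρ < 1) :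
    ConcaveOn ℝ {p : ℝ × ℝ | 0 ≤ p.1 ∧ 0 ≤ p.2}
      (fun p : ℝ × ℝ =>
        Real.log (1 + a * p.2 + p.1 - (p.1 + ρ * σ) ^ 2 / (p.1 + σ ^ 2))) := by
  set S : Set (ℝ × ℝ) := {p : ℝ × ℝ | 0 ≤ p.1 ∧ 0 ≤ p.2} with hS
  have hSconv : Convex ℝ S := by
    have : S = {p : ℝ × ℝ | 0 ≤ p.1} ∩ {p : ℝ × ℝ | 0 ≤ p.2} := rfl
    rw [this]
    exact (convex_halfSpace_ge (LinearMap.isLinear (LinearMap.fst ℝ ℝ ℝ)) 0).inter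
      (convex_halfSpace_ge (LinearMap.isLinear (LinearMap.snd ℝ ℝ ℝ)) 0)
  set K : ℝ := (ρ * σ - σ ^ 2) ^ 2 with hK
  set C : ℝ := 1 + σ ^ 2 - 2 * ρ * σ with hC
  have hden : ∀ p ∈ S, (0:ℝ) < p.1 + σ ^ 2 := fun p hp => by
    have := hp.1; positivity
  -- pointwise identity on S
  have heq : ∀ p ∈ S, 1 + a * p.2 + p.1 - (p.1 + ρ * σ) ^ 2 / (p.1 + σ ^ 2)
      = C + a * p.2 - K / (p.1 + σ ^ 2) := by
    intro p hp
    have h := (hden p hp).ne'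
    field_simp [hC, hK]
    ring
  -- concavity of the inner function g
  have hinv : ConvexOn ℝ (Ioi (0:ℝ)) fun x : ℝ => x ^ (-1 : ℤ) :=
    (strictConvexOn_zpow (by norm_num) (by norm_num)).convexOn
  have haff : ConvexOn ℝ S (fun p : ℝ × ℝ => K * (p.1 + σ ^ 2)⁻¹) := by
    have hmap : ConvexOn ℝ S (fun p : ℝ × ℝ => (p.1 + σ ^ 2)⁻¹) := by
      have hcomp := hinv.comp_affineMap
        ((LinearMap.fst ℝ ℝ ℝ).toAffineMap + AffineMap.const ℝ (ℝ × ℝ) (σ ^ 2))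
      refine ConvexOn.congr (ConvexOn.subset hcomp ?_ hSconv) ?_
      · intro p hp
        have := hden p hp
        simp only [mem_preimage, mem_Ioi]
        simpa using this
      · intro p hp
        simp [zpow_neg_one]
    have := hmap.smul (c := K) (by positivity)
    simpa [smul_eq_mul] using this
  have hg : ConcaveOn ℝ S (fun p : ℝ × ℝ => C + a * p.2 - K / (p.1 + σ ^ 2)) := by
    have h1 : ConcaveOn ℝ S (fun p : ℝ × ℝ => C + a * p.2) := by
      refine ⟨hSconv, fun x hx y hy c d hc hd hcd => le_of_eq ?_⟩
      simp only [Prod.smul_snd, Prod.snd_add, smul_eq_mul]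
      linear_combination C * hcd
    have h2 : ConcaveOn ℝ S (fun p : ℝ × ℝ => -(K * (p.1 + σ ^ 2)⁻¹)) := haff.neg
    have := h1.add h2
    refine this.congr fun p hp => ?_
    simp [div_eq_mul_inv, sub_eq_add_neg]
  -- positivity of g on S
  have hpos : ∀ p ∈ S, 0 < C + a * p.2 - K / (p.1 + σ ^ 2) := by
    intro p hp
    have hd := hden p hp
    have hKle : K / (p.1 + σ ^ 2) ≤ K / σ ^ 2 := by
      apply div_le_div_of_nonneg_left (by positivity) (by positivity)
      linarith [hp.1]
    have hKσ : K / σ ^ 2 = (ρ - σ) ^ 2 := by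
      field_simp [hK]; ring
    have h2 : 0 ≤ a * p.2 := mul_nonneg ha hp.2
    have hρsq : ρ ^ 2 < 1 := by nlinarith
    rw [hKσ] at hKle
    have : C - (ρ - σ) ^ 2 = 1 - ρ ^ 2 := by rw [hC]; ring
    nlinarith
  exact (concaveOn_log_comp hg hpos).congr fun p hp => by rw [heq p hp]
end

section
/- For parameters a ≥ 0, σ > 0 and ρ ∈ [0,1), define f(p₁,p₂) = 1 + a·p₂ + p₁ − (p₁+ρσ)²/(p₁+σ²). Let n ≥ 1, let P₁ ≥ 0 and P₂ ≥ 0, and let p₁₁,…,p₁ₙ and p₂₁,…,p₂ₙ be nonnegative reals with (1/n)∑ᵢ p₁ᵢ ≤ P₁ and (1/n)∑ᵢ p₂ᵢ ≤ P₂. Then (1/n)∑ᵢ log f(p₁ᵢ, p₂ᵢ) ≤ log f(P₁, P₂). -/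
open Real Finset

lemma q_concave (s : ℝ) (hs : 0 < s) :
    ConcaveOn ℝ (Set.Ici 0) (fun p : ℝ => p / (p + s)) := by
  constructor
  · exact convex_Ici 0
  · intro x hx y hy α β hα hβ hαβ
    simp only [smul_eq_mul] at *
    have hx0 : (0:ℝ) ≤ x := hx
    have hy0 : (0:ℝ) ≤ y := hy
    have hx' : 0 < x + s := by linarith
    have hy' : 0 < y + s := by linarith
    have hxy' : 0 < α * x + β * y + s := by nlinarith
    have key : α * (x / (x + s)) + β * (y / (y + s))
        = (α * x * (y + s) + β * y * (x + s)) / ((x + s) * (y + s)) := by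
      field_simp
      try ring
    rw [key, div_le_div_iff₀ (by positivity) (by positivity)]
    have hβ' : β = 1 - α := by linarith
    subst hβ'
    nlinarith [mul_nonneg (mul_nonneg (mul_nonneg hα hβ) hs.le) (sq_nonneg (x - y))]

lemma q_mono (s : ℝ) (hs : 0 < s) {p r : ℝ} (hp : 0 ≤ p) (hpr : p ≤ r) :
    p / (p + s) ≤ r / (r + s) := by
  have hr : 0 ≤ r := le_trans hp hpr
  rw [div_le_div_iff₀ (by linarith) (by linarith)]
  nlinarith

/-- The Jensen step (15) of the proof of Theorem 1: with
`f(p₁,p₂) = 1 + a·p₂ + p₁ − (p₁+ρσ)²/(p₁+σ²)`, block power constraints give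
`(1/n) ∑ᵢ log f(p₁ᵢ, p₂ᵢ) ≤ log f(P₁, P₂)`. -/
theorem stmt_5 (a σ ρ : ℝ) (ha : 0 ≤ a) (hσ : 0 < σ) (hρ0 : 0 ≤ ρ) (hρ1 : ρ < 1)
    (n : ℕ) (hn : 1 ≤ n) (P₁ P₂ : ℝ) (hP₁ : 0 ≤ P₁) (hP₂ : 0 ≤ P₂)
    (p₁ p₂ : Fin n → ℝ) (hp₁ : ∀ i, 0 ≤ p₁ i) (hp₂ : ∀ i, 0 ≤ p₂ i)
    (hsum₁ : (1 / (n : ℝ)) * ∑ i, p₁ i ≤ P₁)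
    (hsum₂ : (1 / (n : ℝ)) * ∑ i, p₂ i ≤ P₂) :
    (1 / (n : ℝ)) * ∑ i,
        Real.log (1 + a * p₂ i + p₁ i - (p₁ i + ρ * σ) ^ 2 / (p₁ i + σ ^ 2)) ≤
      Real.log (1 + a * P₂ + P₁ - (P₁ + ρ * σ) ^ 2 / (P₁ + σ ^ 2)) := by
  have hn' : (0:ℝ) < n := by exact_mod_cast Nat.lt_of_lt_of_le Nat.zero_lt_one hn
  have hs : (0:ℝ) < σ ^ 2 := by positivity
  have hρ2 : 0 < 1 - ρ ^ 2 := by nlinarith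
  -- rewrite f in the form (1 - ρ² + A) + (σ-ρ)² * (p/(p+σ²))
  have key : ∀ p A : ℝ, 0 ≤ p →
      1 + A + p - (p + ρ * σ) ^ 2 / (p + σ ^ 2)
        = (1 - ρ ^ 2 + A) + (σ - ρ) ^ 2 * (p / (p + σ ^ 2)) := by
    intro p A hp
    have hne : p + σ ^ 2 ≠ 0 := by positivity
    field_simp
    ring
  set g : Fin n → ℝ := fun i =>
    (1 - ρ ^ 2 + a * p₂ i) + (σ - ρ) ^ 2 * (p₁ i / (p₁ i + σ ^ 2)) with hg
  have hgpos : ∀ i, 0 < g i := by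
    intro i
    have h1 : 0 ≤ a * p₂ i := mul_nonneg ha (hp₂ i)
    have h2 : 0 ≤ (σ - ρ) ^ 2 * (p₁ i / (p₁ i + σ ^ 2)) := by
      have := hp₁ i; positivity
    simp only [hg]; linarith
  have hrw : ∀ i, Real.log (1 + a * p₂ i + p₁ i - (p₁ i + ρ * σ) ^ 2 / (p₁ i + σ ^ 2))
      = Real.log (g i) := by
    intro i; rw [key (p₁ i) (a * p₂ i) (hp₁ i)]
  have hw0 : ∀ i ∈ (univ : Finset (Fin n)), (0:ℝ) ≤ 1 / (n : ℝ) := by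
    intro i _; positivity
  have hw1 : ∑ _i ∈ (univ : Finset (Fin n)), (1:ℝ) / (n : ℝ) = 1 := by
    simp [Finset.sum_const, Finset.card_univ]
    field_simp
  -- log Jensen
  have jlog : ∑ i, (1 / (n:ℝ)) • Real.log (g i)
      ≤ Real.log (∑ i, (1 / (n:ℝ)) • g i) :=
    (strictConcaveOn_log_Ioi.concaveOn).le_map_sum hw0 hw1 (fun i _ => hgpos i)
  -- q Jensen
  have jq : ∑ i, (1 / (n:ℝ)) • (p₁ i / (p₁ i + σ ^ 2))
      ≤ ((∑ i, (1 / (n:ℝ)) • p₁ i) / ((∑ i, (1 / (n:ℝ)) • p₁ i) + σ ^ 2)) := by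
    have := (q_concave (σ ^ 2) hs).le_map_sum hw0 hw1
      (fun i _ => Set.mem_Ici.mpr (hp₁ i))
    simpa using this
  have hmean₁ : (0:ℝ) ≤ ∑ i, (1 / (n:ℝ)) • p₁ i := by
    apply Finset.sum_nonneg
    intro i _
    have := hp₁ i
    simp only [smul_eq_mul]
    positivity
  have hmean₁' : ∑ i, (1 / (n:ℝ)) • p₁ i ≤ P₁ := by
    simpa [smul_eq_mul, Finset.mul_sum] using hsum₁
  have hqP : ((∑ i, (1 / (n:ℝ)) • p₁ i) / ((∑ i, (1 / (n:ℝ)) • p₁ i) + σ ^ 2))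
      ≤ P₁ / (P₁ + σ ^ 2) := q_mono (σ ^ 2) hs hmean₁ hmean₁'
  -- mean of g
  have hsumg : ∑ i, (1 / (n:ℝ)) • g i
      = (1 - ρ ^ 2) + a * ((1 / (n:ℝ)) * ∑ i, p₂ i)
        + (σ - ρ) ^ 2 * (∑ i, (1 / (n:ℝ)) • (p₁ i / (p₁ i + σ ^ 2))) := by
    have hterm : ∀ i : Fin n, (1 / (n:ℝ)) * g i
        = (1 / (n:ℝ)) * (1 - ρ ^ 2) + a * ((1 / (n:ℝ)) * p₂ i)
          + (σ - ρ) ^ 2 * ((1 / (n:ℝ)) * (p₁ i / (p₁ i + σ ^ 2))) := by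
      intro i; simp only [hg]; ring
    simp only [smul_eq_mul, hterm]
    rw [Finset.sum_add_distrib, Finset.sum_add_distrib, ← Finset.mul_sum, ← Finset.mul_sum,
      ← Finset.mul_sum, Finset.sum_const, Finset.card_univ, Fintype.card_fin, nsmul_eq_mul]
    have hnn : 1 / (n:ℝ) * ((n:ℝ) * (1 - ρ ^ 2)) = 1 - ρ ^ 2 := by field_simp
    rw [hnn, ← Finset.mul_sum]
  have hsumg_le : ∑ i, (1 / (n:ℝ)) • g i
      ≤ (1 - ρ ^ 2 + a * P₂) + (σ - ρ) ^ 2 * (P₁ / (P₁ + σ ^ 2)) := by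
    rw [hsumg]
    have h2 : a * ((1 / (n:ℝ)) * ∑ i, p₂ i) ≤ a * P₂ :=
      mul_le_mul_of_nonneg_left hsum₂ ha
    have h3 : (σ - ρ) ^ 2 * (∑ i, (1 / (n:ℝ)) • (p₁ i / (p₁ i + σ ^ 2)))
        ≤ (σ - ρ) ^ 2 * (P₁ / (P₁ + σ ^ 2)) :=
      mul_le_mul_of_nonneg_left (le_trans jq hqP) (sq_nonneg _)
    linarith
  have hfP : 0 < (1 - ρ ^ 2 + a * P₂) + (σ - ρ) ^ 2 * (P₁ / (P₁ + σ ^ 2)) := by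
    have h1 : 0 ≤ a * P₂ := mul_nonneg ha hP₂
    have h2 : 0 ≤ (σ - ρ) ^ 2 * (P₁ / (P₁ + σ ^ 2)) := by positivity
    linarith
  have hApos : 0 < ∑ i, (1 / (n:ℝ)) • g i := by
    apply Finset.sum_pos
    · intro i _
      have := hgpos i
      simp only [smul_eq_mul]
      positivity
    · haveI : Nonempty (Fin n) :=
        Fin.pos_iff_nonempty.mp (Nat.lt_of_lt_of_le Nat.zero_lt_one hn)
      exact Finset.univ_nonempty
  calc (1 / (n : ℝ)) * ∑ i,
        Real.log (1 + a * p₂ i + p₁ i - (p₁ i + ρ * σ) ^ 2 / (p₁ i + σ ^ 2))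
      = ∑ i, (1 / (n:ℝ)) • Real.log (g i) := by
        simp only [smul_eq_mul, Finset.mul_sum]
        exact Finset.sum_congr rfl fun i _ => by rw [hrw i]
    _ ≤ Real.log (∑ i, (1 / (n:ℝ)) • g i) := jlog
    _ ≤ Real.log ((1 - ρ ^ 2 + a * P₂) + (σ - ρ) ^ 2 * (P₁ / (P₁ + σ ^ 2))) :=
        Real.log_le_log hApos hsumg_le
    _ = Real.log (1 + a * P₂ + P₁ - (P₁ + ρ * σ) ^ 2 / (P₁ + σ ^ 2)) := by
        rw [key P₁ (a * P₂) hP₁]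
end

section
/- Let a, b ∈ (0,1) and P₁, P₂ ≥ 0 be real numbers satisfying the four conditions: [b(aP₂+1)² − a(bP₁+1)² + 1]² ≥ 4b(aP₂+1)², [a(bP₁+1)² − b(aP₂+1)² + 1]² ≥ 4a(bP₁+1)², b(aP₂+1)² − a(bP₁+1)² + 1 ≥ 0, and a(bP₁+1)² − b(aP₂+1)² + 1 ≥ 0. Then √a·(bP₁+1) + √b·(aP₂+1) ≤ 1. -/
/-- Necessity part of the feasibility analysis in the proof of Theorem 2: the four
feasibility conditions on the genie parameters force the noisy-interference
condition `√a(bP₁+1) + √b(aP₂+1) ≤ 1`. -/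
theorem stmt_7 (a b P₁ P₂ : ℝ)
    (ha0 : 0 < a) (ha1 : a < 1) (hb0 : 0 < b) (hb1 : b < 1)
    (hP₁ : 0 ≤ P₁) (hP₂ : 0 ≤ P₂)
    (h1 : 4 * b * (a * P₂ + 1) ^ 2 ≤
      (b * (a * P₂ + 1) ^ 2 - a * (b * P₁ + 1) ^ 2 + 1) ^ 2)
    (h2 : 4 * a * (b * P₁ + 1) ^ 2 ≤
      (a * (b * P₁ + 1) ^ 2 - b * (a * P₂ + 1) ^ 2 + 1) ^ 2)
    (h3 : 0 ≤ b * (a * P₂ + 1) ^ 2 - a * (b * P₁ + 1) ^ 2 + 1)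
    (h4 : 0 ≤ a * (b * P₁ + 1) ^ 2 - b * (a * P₂ + 1) ^ 2 + 1) :
    Real.sqrt a * (b * P₁ + 1) + Real.sqrt b * (a * P₂ + 1) ≤ 1 := by
  set x := Real.sqrt a * (b * P₁ + 1) with hxdef
  set y := Real.sqrt b * (a * P₂ + 1) with hydef
  have hbp : (0:ℝ) < b * P₁ + 1 := by nlinarith
  have hap : (0:ℝ) < a * P₂ + 1 := by nlinarith
  have hx0 : 0 < x := mul_pos (Real.sqrt_pos.mpr ha0) hbp
  have hy0 : 0 < y := mul_pos (Real.sqrt_pos.mpr hb0) hap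
  have hx2 : x ^ 2 = a * (b * P₁ + 1) ^ 2 := by
    rw [hxdef, mul_pow, Real.sq_sqrt ha0.le]
  have hy2 : y ^ 2 = b * (a * P₂ + 1) ^ 2 := by
    rw [hydef, mul_pow, Real.sq_sqrt hb0.le]
  rw [← hx2, ← hy2] at h1 h2 h3 h4
  -- (2y)^2 ≤ (y²−x²+1)^2 with both nonneg gives 2y ≤ y²−x²+1
  have e1 : 2 * y ≤ y ^ 2 - x ^ 2 + 1 := by nlinarith [hy0.le, h3, h1]
  have e2 : 2 * x ≤ x ^ 2 - y ^ 2 + 1 := by nlinarith [hx0.le, h4, h2]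
  linarith
end

section
/- Let a, b ∈ (0,1) and P₁, P₂ ≥ 0 be real numbers with √a·(bP₁+1) + √b·(aP₂+1) ≤ 1. Set x = √a·(bP₁+1) and y = √b·(aP₂+1). Then the discriminants D₁ = (y² − x² + 1)² − 4y² and D₂ = (x² − y² + 1)² − 4x² are both nonnegative, and the quantities σ₁² = (y² − x² + 1 + √D₁)/(2b) and σ₂² = (x² − y² + 1 + √D₂)/(2a) satisfy σ₁² > 0, σ₂² > 0, b·σ₁² ≤ 1 and a·σ₂² ≤ 1. -/
lemma stmt_8_aux (x y : ℝ) (hx0 : 0 < x) (hy0 : 0 < y) (hni : x + y ≤ 1) :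
    0 ≤ (y ^ 2 - x ^ 2 + 1) ^ 2 - 4 * y ^ 2 ∧
    0 < y ^ 2 - x ^ 2 + 1 + Real.sqrt ((y ^ 2 - x ^ 2 + 1) ^ 2 - 4 * y ^ 2) ∧
    y ^ 2 - x ^ 2 + 1 + Real.sqrt ((y ^ 2 - x ^ 2 + 1) ^ 2 - 4 * y ^ 2) ≤ 2 := by
  have hx1 : x < 1 := by linarith
  have hD : 0 ≤ (y ^ 2 - x ^ 2 + 1) ^ 2 - 4 * y ^ 2 := by
    have h1 : 0 ≤ (1 - y - x) * (1 - y + x) := by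
      apply mul_nonneg <;> linarith
    have h2 : 0 ≤ (1 + y - x) * (1 + y + x) := by
      apply mul_nonneg <;> linarith
    nlinarith [mul_nonneg h1 h2]
  have hsq : Real.sqrt ((y ^ 2 - x ^ 2 + 1) ^ 2 - 4 * y ^ 2) ≤ 1 + x ^ 2 - y ^ 2 := by
    have hle : (y ^ 2 - x ^ 2 + 1) ^ 2 - 4 * y ^ 2 ≤ (1 + x ^ 2 - y ^ 2) ^ 2 := by
      nlinarith [sq_nonneg x]
    have hnn : 0 ≤ 1 + x ^ 2 - y ^ 2 := by nlinarith
    calc Real.sqrt ((y ^ 2 - x ^ 2 + 1) ^ 2 - 4 * y ^ 2)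
        ≤ Real.sqrt ((1 + x ^ 2 - y ^ 2) ^ 2) := Real.sqrt_le_sqrt hle
      _ = 1 + x ^ 2 - y ^ 2 := by rw [Real.sqrt_sq hnn]
  have hsnn : 0 ≤ Real.sqrt ((y ^ 2 - x ^ 2 + 1) ^ 2 - 4 * y ^ 2) := Real.sqrt_nonneg _
  refine ⟨hD, ?_, by linarith⟩
  nlinarith

/-- Feasibility of the genie noise variances (44)–(45) in the proof of Theorem 2:
under the noisy-interference condition, with `x = √a(bP₁+1)`, `y = √b(aP₂+1)`, the
discriminants are nonnegative and the resulting `σ₁², σ₂²` satisfy `σᵢ² > 0`,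
`bσ₁² ≤ 1`, `aσ₂² ≤ 1`. -/
theorem stmt_8 (a b P₁ P₂ : ℝ)
    (ha0 : 0 < a) (ha1 : a < 1) (hb0 : 0 < b) (hb1 : b < 1)
    (hP₁ : 0 ≤ P₁) (hP₂ : 0 ≤ P₂)
    (x y D₁ D₂ s₁ s₂ : ℝ)
    (hx : x = Real.sqrt a * (b * P₁ + 1))
    (hy : y = Real.sqrt b * (a * P₂ + 1))
    (hni : x + y ≤ 1)
    (hD₁ : D₁ = (y ^ 2 - x ^ 2 + 1) ^ 2 - 4 * y ^ 2)
    (hD₂ : D₂ = (x ^ 2 - y ^ 2 + 1) ^ 2 - 4 * x ^ 2)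
    (hs₁ : s₁ = (y ^ 2 - x ^ 2 + 1 + Real.sqrt D₁) / (2 * b))
    (hs₂ : s₂ = (x ^ 2 - y ^ 2 + 1 + Real.sqrt D₂) / (2 * a)) :
    0 ≤ D₁ ∧ 0 ≤ D₂ ∧ 0 < s₁ ∧ 0 < s₂ ∧ b * s₁ ≤ 1 ∧ a * s₂ ≤ 1 := by
  have hx0 : 0 < x := by
    rw [hx]; positivity
  have hy0 : 0 < y := by
    rw [hy]; positivity
  obtain ⟨hD1, hN1, hM1⟩ := stmt_8_aux x y hx0 hy0 hni
  obtain ⟨hD2, hN2, hM2⟩ := stmt_8_aux y x hy0 hx0 (by linarith)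
  rw [← hD₁] at hD1 hN1 hM1
  rw [← hD₂] at hD2 hN2 hM2
  refine ⟨hD1, hD2, ?_, ?_, ?_, ?_⟩
  · rw [hs₁]; positivity
  · rw [hs₂]; positivity
  · rw [hs₁]
    have he : b * ((y ^ 2 - x ^ 2 + 1 + Real.sqrt D₁) / (2 * b))
        = (y ^ 2 - x ^ 2 + 1 + Real.sqrt D₁) / 2 := by
      field_simp
    rw [he]; linarith
  · rw [hs₂]
    have he : a * ((x ^ 2 - y ^ 2 + 1 + Real.sqrt D₂) / (2 * a))
        = (x ^ 2 - y ^ 2 + 1 + Real.sqrt D₂) / 2 := by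
      field_simp
    rw [he]; linarith
end

section
/- Let a, b ∈ (0,1) and P₁, P₂ ≥ 0 be real numbers with √a·(bP₁+1) + √b·(aP₂+1) ≤ 1. Then there exist real numbers σ₁ > 0, σ₂ > 0 and ρ₁, ρ₂ ∈ [0,1) with a·σ₂² = 1 − ρ₁² and b·σ₁² = 1 − ρ₂², such that (1/2)log(1 + P₁/σ₁²) − (1/2)log(aP₂ + 1 − ρ₁²) + (1/2)log(1 + P₁ + aP₂ − (P₁+ρ₁σ₁)²/(P₁+σ₁²)) + (1/2)log(1 + P₂/σ₂²) − (1/2)log(bP₁ + 1 − ρ₂²) + (1/2)log(1 + P₂ + bP₁ − (P₂+ρ₂σ₂)²/(P₂+σ₂²)) = (1/2)log(1 + P₁/(1+aP₂)) + (1/2)log(1 + P₂/(1+bP₁)). -/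
open Real


lemma key (t P ρ σ : ℝ) (hP : 0 ≤ P) (ht : 0 ≤ t)
    (hρ0 : 0 < ρ) (hρ1 : ρ < 1) (hσ : 0 < σ) (h : ρ * σ = t + 1) :
    (1/2) * Real.log (1 + P/σ^2) - (1/2) * Real.log (t + 1 - ρ^2)
      + (1/2) * Real.log (1 + P + t - (P + ρ*σ)^2/(P + σ^2))
    = (1/2) * Real.log (1 + P/(1+t)) := by
  have hσ1 : 1 < σ := by nlinarith [mul_pos hρ0 hσ]
  have hσ2 : t + 1 < σ^2 := by nlinarith [mul_pos hσ (show (0:ℝ) < σ - ρ by linarith)]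
  have hPσ : 0 < P + σ^2 := by positivity
  have h1t : (0:ℝ) < 1 + t := by linarith
  have h2 : ρ^2*σ^2 = (t+1)^2 := by linear_combination (ρ*σ + t + 1) * h
  have hA : 0 < 1 + P/σ^2 := by positivity
  have hB : 0 < t + 1 - ρ^2 := by nlinarith
  have hR : 0 < 1 + P/(1+t) := by positivity
  have hC : 0 < 1 + P + t - (P + ρ*σ)^2/(P+σ^2) := by
    rw [h, sub_pos, div_lt_iff₀ hPσ]; nlinarith
  have e1 : 1 + P/σ^2 = (σ^2+P)/σ^2 := by field_simp
  have e2 : 1 + P + t - (P+ρ*σ)^2/(P+σ^2) = (1+P+t)*(σ^2-(t+1))/(P+σ^2) := by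
    field_simp
    linear_combination (-(ρ*σ) - t - 1 - 2*P) * h
  have e3 : 1 + P/(1+t) = (1+t+P)/(1+t) := by field_simp
  have e4 : t+1-ρ^2 = (σ^2-(t+1))*(t+1)/σ^2 := by
    rw [eq_div_iff (by positivity : (σ:ℝ)^2 ≠ 0)]
    linear_combination -h2
  have hkey : Real.log (1 + P/σ^2) + Real.log (1 + P + t - (P + ρ*σ)^2/(P+σ^2))
      = Real.log (t+1-ρ^2) + Real.log (1 + P/(1+t)) := by
    rw [← Real.log_mul hA.ne' hC.ne', ← Real.log_mul hB.ne' hR.ne']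
    congr 1
    rw [e1, e2, e3, e4]
    field_simp
    ring
  linarith


lemma exists_xy (u v : ℝ) (hu0 : 0 < u) (hv0 : 0 < v) (huv : u + v ≤ 1) :
    ∃ x y : ℝ, 0 < x ∧ x < 1 ∧ 0 < y ∧ y < 1 ∧ y * (1-x) = u^2 ∧ x * (1-y) = v^2 := by
  have huv2 : u^2 + v^2 < 1 := by nlinarith [mul_pos hu0 hv0]
  set S : ℝ := 1 - u^2 + v^2 with hSdef
  have hS0 : 0 < S := by nlinarith
  have hD : 0 ≤ S^2 - 4*v^2 := by
    have h1 : 0 ≤ (1-v)^2 - u^2 := by nlinarith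
    have h2 : 0 ≤ (1+v)^2 - u^2 := by nlinarith
    calc (0:ℝ) ≤ ((1-v)^2 - u^2) * ((1+v)^2 - u^2) := mul_nonneg h1 h2
      _ = S^2 - 4*v^2 := by rw [hSdef]; ring
  set w : ℝ := Real.sqrt (S^2 - 4*v^2) with hwdef
  have hw0 : 0 ≤ w := Real.sqrt_nonneg _
  have hw2 : w^2 = S^2 - 4*v^2 := Real.sq_sqrt hD
  set x : ℝ := (S - w)/2 with hxdef
  have hx0 : 0 < x := by
    have h : w < S := by nlinarith
    rw [hxdef]; linarith
  have hxA : x < 1 - u^2 := by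
    have h : v^2 - (1 - u^2) < w := by nlinarith
    rw [hxdef, hSdef] at *; linarith
  have hx1 : x < 1 := by nlinarith [sq_nonneg u]
  have hquad : x^2 - (1-u^2+v^2)*x + v^2 = 0 := by
    rw [hxdef, hSdef]; linear_combination (1/4) * hw2
  have h1x : 0 < 1 - x := by linarith
  refine ⟨x, u^2/(1-x), hx0, hx1, div_pos (by positivity) h1x, ?_, ?_, ?_⟩
  · rw [div_lt_one h1x]; linarith
  · field_simp
  · field_simp
    linear_combination -hquad

/-- Analytic core of Theorem 2: under the noisy-interference condition
`√a(bP₁+1) + √b(aP₂+1) ≤ 1`, there exist genie parameters `σ₁, σ₂, ρ₁, ρ₂` making the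
genie-aided outer bound equal to the sum rate achieved by treating interference as
noise. -/
theorem stmt_9 (a b P₁ P₂ : ℝ)
    (ha0 : 0 < a) (ha1 : a < 1) (hb0 : 0 < b) (hb1 : b < 1)
    (hP₁ : 0 ≤ P₁) (hP₂ : 0 ≤ P₂)
    (hni : Real.sqrt a * (b * P₁ + 1) + Real.sqrt b * (a * P₂ + 1) ≤ 1) :
    ∃ σ₁ σ₂ ρ₁ ρ₂ : ℝ, 0 < σ₁ ∧ 0 < σ₂ ∧
      0 ≤ ρ₁ ∧ ρ₁ < 1 ∧ 0 ≤ ρ₂ ∧ ρ₂ < 1 ∧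
      a * σ₂ ^ 2 = 1 - ρ₁ ^ 2 ∧ b * σ₁ ^ 2 = 1 - ρ₂ ^ 2 ∧
      (1 / 2) * Real.log (1 + P₁ / σ₁ ^ 2)
        - (1 / 2) * Real.log (a * P₂ + 1 - ρ₁ ^ 2)
        + (1 / 2) * Real.log (1 + P₁ + a * P₂
            - (P₁ + ρ₁ * σ₁) ^ 2 / (P₁ + σ₁ ^ 2))
        + (1 / 2) * Real.log (1 + P₂ / σ₂ ^ 2)
        - (1 / 2) * Real.log (b * P₁ + 1 - ρ₂ ^ 2)
        + (1 / 2) * Real.log (1 + P₂ + b * P₁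
            - (P₂ + ρ₂ * σ₂) ^ 2 / (P₂ + σ₂ ^ 2))
      = (1 / 2) * Real.log (1 + P₁ / (1 + a * P₂))
        + (1 / 2) * Real.log (1 + P₂ / (1 + b * P₁)) := by
  have hbP : (0:ℝ) < b * P₁ + 1 := by positivity
  have haP : (0:ℝ) < a * P₂ + 1 := by positivity
  have hu0 : 0 < Real.sqrt a * (b * P₁ + 1) := mul_pos (Real.sqrt_pos.mpr ha0) hbP
  have hv0 : 0 < Real.sqrt b * (a * P₂ + 1) := mul_pos (Real.sqrt_pos.mpr hb0) haP
  obtain ⟨x, y, hx0, hx1, hy0, hy1, hyx, hxy⟩ := exists_xy _ _ hu0 hv0 hni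
  have hu2 : (Real.sqrt a * (b * P₁ + 1))^2 = a * (b * P₁ + 1)^2 := by
    rw [mul_pow, Real.sq_sqrt ha0.le]
  have hv2 : (Real.sqrt b * (a * P₂ + 1))^2 = b * (a * P₂ + 1)^2 := by
    rw [mul_pow, Real.sq_sqrt hb0.le]
  rw [hu2] at hyx
  rw [hv2] at hxy
  set ρ₁ : ℝ := Real.sqrt x with hρ1def
  set ρ₂ : ℝ := Real.sqrt y with hρ2def
  have hρ1 : 0 < ρ₁ := Real.sqrt_pos.mpr hx0
  have hρ2 : 0 < ρ₂ := Real.sqrt_pos.mpr hy0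
  have hρ1sq : ρ₁^2 = x := Real.sq_sqrt hx0.le
  have hρ2sq : ρ₂^2 = y := Real.sq_sqrt hy0.le
  have hρ1lt : ρ₁ < 1 := by nlinarith
  have hρ2lt : ρ₂ < 1 := by nlinarith
  set σ₁ : ℝ := (a*P₂+1)/ρ₁ with hσ1def
  set σ₂ : ℝ := (b*P₁+1)/ρ₂ with hσ2def
  have hσ1 : 0 < σ₁ := div_pos haP hρ1
  have hσ2 : 0 < σ₂ := div_pos hbP hρ2
  have hρσ1 : ρ₁ * σ₁ = a*P₂+1 := by rw [hσ1def]; field_simp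
  have hρσ2 : ρ₂ * σ₂ = b*P₁+1 := by rw [hσ2def]; field_simp
  have hc1 : a * σ₂^2 = 1 - ρ₁^2 := by
    rw [hσ2def, div_pow, hρ2sq, hρ1sq, mul_div_assoc', div_eq_iff hy0.ne']
    linear_combination -hyx
  have hc2 : b * σ₁^2 = 1 - ρ₂^2 := by
    rw [hσ1def, div_pow, hρ1sq, hρ2sq, mul_div_assoc', div_eq_iff hx0.ne']
    linear_combination -hxy
  have k1 := key (a*P₂) P₁ ρ₁ σ₁ hP₁ (by positivity) hρ1 hρ1lt hσ1 hρσ1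
  have k2 := key (b*P₁) P₂ ρ₂ σ₂ hP₂ (by positivity) hρ2 hρ2lt hσ2 hρσ2
  exact ⟨σ₁, σ₂, ρ₁, ρ₂, hσ1, hσ2, hρ1.le, hρ1lt, hρ2.le, hρ2lt, hc1, hc2, by linarith⟩
end

section
/- Let a ∈ (0,1), P₁ ≥ 0, P₂ ≥ 0, and let α be a real number with a < α ≤ (a + aP₂)/(1 + aP₂). Define P₂′ = (a − α)/(aα − a) and P₁′ = P₁/a + P₂ − P₂′. Then (1/2)·log(1 + P₁′/(P₂′ + 1/a)) + (α/2)·log(1 + P₂′) = (1/2)·log(1 + P₁ + aP₂) − (1/2)·log(1 + (a − α)/(α − 1)) + (α/2)·log(1 + (a − α)/(aα − a)). -/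
/-- Remark 3 computation: Kramer's degraded-broadcast power-sharing bound coincides
with the weighted-sum bound (3) of Theorem 1. -/
theorem stmt_14 (a P₁ P₂ α P₁' P₂' : ℝ)
    (ha0 : 0 < a) (ha1 : a < 1) (hP₁ : 0 ≤ P₁) (hP₂ : 0 ≤ P₂)
    (hα₁ : a < α) (hα₂ : α ≤ (a + a * P₂) / (1 + a * P₂))
    (hP₂' : P₂' = (a - α) / (a * α - a))
    (hP₁' : P₁' = P₁ / a + P₂ - P₂') :
    (1 / 2) * Real.log (1 + P₁' / (P₂' + 1 / a)) +
        (α / 2) * Real.log (1 + P₂') =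
      (1 / 2) * Real.log (1 + P₁ + a * P₂) -
        (1 / 2) * Real.log (1 + (a - α) / (α - 1)) +
        (α / 2) * Real.log (1 + (a - α) / (a * α - a)) := by
  have hden : (0:ℝ) < 1 + a * P₂ := by positivity
  have hα1 : α < 1 := by
    have : (a + a * P₂) / (1 + a * P₂) < 1 := by
      rw [div_lt_one hden]; linarith
    linarith
  have hαne : α - 1 ≠ 0 := by linarith
  have hane : a ≠ 0 := ne_of_gt ha0
  have h1a : (0:ℝ) < 1 - a := by linarith
  have h1α : (0:ℝ) < 1 - α := by linarith
  have h1ane : (1:ℝ) - a ≠ 0 := ne_of_gt h1a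
  have h1αne : (1:ℝ) - α ≠ 0 := ne_of_gt h1α
  have haα : a * α - a ≠ 0 := by
    have : a * α - a = a * (α - 1) := by ring
    rw [this]; exact mul_ne_zero hane hαne
  have hd : P₂' + 1 / a = (1 - a) / (a * (1 - α)) := by
    rw [hP₂']; field_simp; ring
  have hdpos : 0 < P₂' + 1 / a := by
    rw [hd]; exact div_pos h1a (mul_pos ha0 h1α)
  have hA : (0:ℝ) < 1 + P₁ + a * P₂ := by positivity
  have hB : (0:ℝ) < (1 - a) / (1 - α) := div_pos h1a h1α
  have h1 : 1 + P₁' / (P₂' + 1 / a) = (1 + P₁ + a * P₂) / ((1 - a) / (1 - α)) := by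
    rw [hP₁', hd, hP₂']
    field_simp
    ring
  have h2 : 1 + (a - α) / (α - 1) = (1 - a) / (1 - α) := by
    field_simp
    ring
  rw [h1, h2, Real.log_div (ne_of_gt hA) (ne_of_gt hB), hP₂']
  ring
end

section
/- Let b ∈ (0,1), P₁ > 0 and η ≥ 0 be real numbers, and define P₁* by: P₁* = P₁ if η ≤ (1 + bP₁)/(b + bP₁); P₁* = (bη − 1)/(b − bη) if (1 + bP₁)/(b + bP₁) ≤ η ≤ 1/b; and P₁* = 0 if η ≥ 1/b. Then for every p ∈ [0, P₁], one has (1/2)·log(p + 1) − (η/2)·log(b·p + 1) ≤ (1/2)·log(P₁* + 1) − (η/2)·log(b·P₁* + 1). -/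
private lemma hd_aux (b η : ℝ) (hb0 : 0 < b) {t : ℝ} (ht : 0 ≤ t) :
    HasDerivAt (fun t => (1/2) * Real.log (t+1) - (η/2) * Real.log (b*t+1))
      ((1/2) * (1/(t+1)) - (η/2) * (b/(b*t+1))) t := by
  have h1 : (0:ℝ) < t + 1 := by linarith
  have h2 : (0:ℝ) < b * t + 1 := by positivity
  have d1 : HasDerivAt (fun t : ℝ => Real.log (t+1)) (1/(t+1)) t := by
    have := (((hasDerivAt_id t).add_const 1).log h1.ne')
    simpa using this
  have d2 : HasDerivAt (fun t : ℝ => Real.log (b*t+1)) (b/(b*t+1)) t := by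
    have := ((((hasDerivAt_id t).const_mul b).add_const 1).log h2.ne')
    simpa using this
  have h := (d1.const_mul (1/2)).sub (d2.const_mul (η/2))
  exact h

private lemma mono_aux (b η : ℝ) (hb0 : 0 < b) {x y : ℝ} (hx : 0 ≤ x) (hxy : x ≤ y)
    (hsign : ∀ t ∈ Set.Icc x y, η * (b * (t+1)) ≤ b*t+1) :
    (1/2) * Real.log (x+1) - (η/2) * Real.log (b*x+1) ≤
      (1/2) * Real.log (y+1) - (η/2) * Real.log (b*y+1) := by
  set f : ℝ → ℝ := fun t => (1/2) * Real.log (t+1) - (η/2) * Real.log (b*t+1) with hf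
  have key : MonotoneOn f (Set.Icc x y) := by
    apply monotoneOn_of_deriv_nonneg (convex_Icc x y)
    · intro t ht
      exact (hd_aux b η hb0 (le_trans hx ht.1)).continuousAt.continuousWithinAt
    · intro t ht
      rw [interior_Icc] at ht
      exact (hd_aux b η hb0 (le_trans hx ht.1.le)).differentiableAt.differentiableWithinAt
    · intro t ht
      rw [interior_Icc] at ht
      rw [(hd_aux b η hb0 (le_trans hx ht.1.le)).deriv]
      have h1 : (0:ℝ) < t + 1 := by linarith [ht.1, hx]
      have h2 : (0:ℝ) < b * t + 1 := by nlinarith [ht.1, hx]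
      have hs := hsign t ⟨ht.1.le, ht.2.le⟩
      rw [sub_nonneg]
      have e1 : η / 2 * (b / (b*t+1)) = (η*b) / (2*(b*t+1)) := by field_simp
      have e2 : 1 / 2 * (1/(t+1)) = 1 / (2*(t+1)) := by field_simp
      rw [e1, e2, div_le_div_iff₀ (by positivity) (by positivity)]
      nlinarith
  exact key ⟨le_refl x, hxy⟩ ⟨hxy, le_refl y⟩ hxy

private lemma anti_aux (b η : ℝ) (hb0 : 0 < b) {x y : ℝ} (hx : 0 ≤ x) (hxy : x ≤ y)
    (hsign : ∀ t ∈ Set.Icc x y, b*t+1 ≤ η * (b * (t+1))) :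
    (1/2) * Real.log (y+1) - (η/2) * Real.log (b*y+1) ≤
      (1/2) * Real.log (x+1) - (η/2) * Real.log (b*x+1) := by
  set f : ℝ → ℝ := fun t => (1/2) * Real.log (t+1) - (η/2) * Real.log (b*t+1) with hf
  have key : AntitoneOn f (Set.Icc x y) := by
    apply antitoneOn_of_deriv_nonpos (convex_Icc x y)
    · intro t ht
      exact (hd_aux b η hb0 (le_trans hx ht.1)).continuousAt.continuousWithinAt
    · intro t ht
      rw [interior_Icc] at ht
      exact (hd_aux b η hb0 (le_trans hx ht.1.le)).differentiableAt.differentiableWithinAt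
    · intro t ht
      rw [interior_Icc] at ht
      rw [(hd_aux b η hb0 (le_trans hx ht.1.le)).deriv]
      have h1 : (0:ℝ) < t + 1 := by linarith [ht.1, hx]
      have h2 : (0:ℝ) < b * t + 1 := by nlinarith [ht.1, hx]
      have hs := hsign t ⟨ht.1.le, ht.2.le⟩
      rw [sub_nonpos]
      have e1 : η / 2 * (b / (b*t+1)) = (η*b) / (2*(b*t+1)) := by field_simp
      have e2 : 1 / 2 * (1/(t+1)) = 1 / (2*(t+1)) := by field_simp
      rw [e1, e2, div_le_div_iff₀ (by positivity) (by positivity)]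
      nlinarith
  exact key ⟨le_refl x, hxy⟩ ⟨hxy, le_refl y⟩ hxy

/-- Maximization (61) in the proof of Theorem 1: the piecewise `P₁*` maximizes
`(1/2)log(p+1) − (η/2)log(bp+1)` over `0 ≤ p ≤ P₁`. -/
theorem stmt_16 (b P₁ η P₁star : ℝ)
    (hb0 : 0 < b) (hb1 : b < 1) (hP₁ : 0 < P₁) (hη : 0 ≤ η)
    (hPstar : P₁star =
      if η ≤ (1 + b * P₁) / (b + b * P₁) then P₁
      else if η ≤ 1 / b then (b * η - 1) / (b - b * η)
      else 0) :
    ∀ p : ℝ, 0 ≤ p → p ≤ P₁ →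
      (1 / 2) * Real.log (p + 1) - (η / 2) * Real.log (b * p + 1) ≤
        (1 / 2) * Real.log (P₁star + 1) - (η / 2) * Real.log (b * P₁star + 1) := by
  intro p hp0 hpP
  have hden : 0 < b + b * P₁ := by nlinarith
  by_cases h1 : η ≤ (1 + b * P₁) / (b + b * P₁)
  · rw [hPstar, if_pos h1]
    apply mono_aux b η hb0 hp0 hpP
    rintro t ⟨ht1, ht2⟩
    have ht0 : 0 ≤ t := le_trans hp0 ht1
    have h1' : η * (b + b * P₁) ≤ 1 + b * P₁ := (le_div_iff₀ hden).mp h1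
    nlinarith [mul_nonneg (sub_nonneg.2 h1') ht0, mul_nonneg (mul_nonneg hη hb0.le) (sub_nonneg.2 ht2)]
  · push_neg at h1
    have h1' : 1 + b * P₁ < η * (b + b * P₁) := (div_lt_iff₀ hden).mp h1
    have hη1 : 1 < η := by nlinarith
    by_cases h2 : η ≤ 1 / b
    · rw [hPstar, if_neg (not_le.mpr h1), if_pos h2]
      have hbη : b * η ≤ 1 := by
        have := (le_div_iff₀ hb0).mp h2; linarith
      have hdneg : b - b * η < 0 := by nlinarith
      set q : ℝ := (b * η - 1) / (b - b * η) with hqdef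
      have hq : q * (b - b * η) = b * η - 1 := div_mul_cancel₀ _ hdneg.ne
      have hq0 : 0 ≤ q := by nlinarith
      rcases le_total p q with hpq | hqp
      · apply mono_aux b η hb0 hp0 hpq
        rintro t ⟨ht1, ht2⟩
        nlinarith [mul_nonneg (sub_nonneg.2 ht2) (by nlinarith : (0:ℝ) ≤ b * η - b)]
      · apply anti_aux b η hb0 hq0 hqp
        rintro t ⟨ht1, ht2⟩
        nlinarith [mul_nonneg (sub_nonneg.2 ht1) (by nlinarith : (0:ℝ) ≤ b * η - b)]
    · rw [hPstar, if_neg (not_le.mpr h1), if_neg h2]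
      push_neg at h2
      apply anti_aux b η hb0 le_rfl hp0
      rintro t ⟨ht1, ht2⟩
      have hbη : 1 < η * b := by
        have := (div_lt_iff₀ hb0).mp h2; linarith
      nlinarith
end

section
/- Let a ∈ (0,1), P₂ > 0 and η be real numbers with a ≤ η ≤ (a + aP₂)/(1 + aP₂), and define q* = (a − η)/(aη − a) for η > a and q* = 0 for η = a. Then q* ∈ [0, P₂], and for every q ∈ [0, P₂], one has (η/2)·log(q + 1) − (1/2)·log(a·q + 1) ≤ (η/2)·log(q* + 1) − (1/2)·log(a·q* + 1). -/
/-- Maximization underlying bound (4) of Theorem 1: for weights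
`a ≤ η ≤ (a+aP₂)/(1+aP₂)`, the power `q* = (a−η)/(aη−a)` (with `q* = 0` when `η = a`)
lies in `[0, P₂]` and maximizes `(η/2)log(q+1) − (1/2)log(aq+1)` over `0 ≤ q ≤ P₂`. -/
theorem stmt_17 (a P₂ η qstar : ℝ)
    (ha0 : 0 < a) (ha1 : a < 1) (hP₂ : 0 < P₂)
    (hη₁ : a ≤ η) (hη₂ : η ≤ (a + a * P₂) / (1 + a * P₂))
    (hq : qstar = if η = a then 0 else (a - η) / (a * η - a)) :
    qstar ∈ Set.Icc 0 P₂ ∧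
      ∀ q ∈ Set.Icc (0 : ℝ) P₂,
        (η / 2) * Real.log (q + 1) - (1 / 2) * Real.log (a * q + 1) ≤
          (η / 2) * Real.log (qstar + 1) - (1 / 2) * Real.log (a * qstar + 1) := by
  have h1P : (0:ℝ) < 1 + a * P₂ := by positivity
  have hη3 : η < 1 := lt_of_le_of_lt hη₂ (by rw [div_lt_one h1P]; linarith)
  have hdenneg : a * η - a < 0 := by nlinarith
  -- key identity
  have hkey : qstar * (a * η - a) = a - η := by
    rw [hq]; split_ifs with h
    · simp [h]
    · rw [div_mul_cancel₀]
      exact fun hc => h (by nlinarith [hc])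
  have hqnn : 0 ≤ qstar := by
    rw [hq]; split_ifs with h
    · exact le_refl 0
    · have hηa : a < η := lt_of_le_of_ne hη₁ (Ne.symm h)
      exact le_of_lt (div_pos_of_neg_of_neg (by linarith) hdenneg)
  have hineq : η * (1 + a * P₂) ≤ a + a * P₂ := by
    rw [← le_div_iff₀ h1P]; exact hη₂
  have hQP : qstar ≤ P₂ := by nlinarith [hkey, hineq]
  set f : ℝ → ℝ := fun q => η / 2 * Real.log (q + 1) - 1 / 2 * Real.log (a * q + 1) with hf
  have hderiv : ∀ x : ℝ, 0 ≤ x → HasDerivAt f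
      ((η * (a * x + 1) - a * (x + 1)) / (2 * (x + 1) * (a * x + 1))) x := by
    intro x hx
    have hx1 : (0:ℝ) < x + 1 := by linarith
    have hax1 : (0:ℝ) < a * x + 1 := by nlinarith
    have h1 : HasDerivAt (fun q : ℝ => Real.log (q + 1)) (1 / (x + 1)) x := by
      have := ((hasDerivAt_id x).add_const 1).log (ne_of_gt hx1)
      simpa using this
    have h2 : HasDerivAt (fun q : ℝ => Real.log (a * q + 1)) (a / (a * x + 1)) x := by
      have := (((hasDerivAt_id x).const_mul a).add_const 1).log (ne_of_gt hax1)
      simpa using this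
    have := (h1.const_mul (η / 2)).sub (h2.const_mul (1 / 2))
    convert this using 1
    · rfl
    · rfl
    · rfl
    field_simp
  -- sign of numerator: η*(a*x+1) - a*(x+1) = a*(η-1)*(x - qstar)
  have hnum : ∀ x : ℝ, η * (a * x + 1) - a * (x + 1) = a * (η - 1) * (x - qstar) := by
    intro x; nlinarith [hkey]
  have hcont : ∀ s : Set ℝ, s ⊆ Set.Icc (0:ℝ) P₂ → ContinuousOn f s := by
    intro s hs x hx
    exact ((hderiv x (hs hx).1).continuousAt).continuousWithinAt
  have hmono : MonotoneOn f (Set.Icc 0 qstar) := by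
    apply monotoneOn_of_deriv_nonneg (convex_Icc _ _)
    · exact hcont _ (Set.Icc_subset_Icc le_rfl hQP)
    · intro x hx
      rw [interior_Icc] at hx
      exact ((hderiv x hx.1.le).differentiableAt.differentiableWithinAt)
    · intro x hx
      rw [interior_Icc] at hx
      rw [(hderiv x hx.1.le).deriv]
      apply div_nonneg
      · rw [hnum]; nlinarith [hx.1, hx.2]
      · nlinarith [mul_pos ha0 hx.1]
  have hanti : AntitoneOn f (Set.Icc qstar P₂) := by
    apply antitoneOn_of_deriv_nonpos (convex_Icc _ _)
    · exact hcont _ (Set.Icc_subset_Icc hqnn le_rfl)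
    · intro x hx
      rw [interior_Icc] at hx
      have hx0 : 0 ≤ x := le_trans hqnn hx.1.le
      exact ((hderiv x hx0).differentiableAt.differentiableWithinAt)
    · intro x hx
      rw [interior_Icc] at hx
      have hx0 : 0 ≤ x := le_trans hqnn hx.1.le
      rw [(hderiv x hx0).deriv]
      apply div_nonpos_of_nonpos_of_nonneg
      · rw [hnum]; nlinarith [hx.1, hx.2]
      · nlinarith [mul_nonneg ha0.le hx0]
  refine ⟨⟨hqnn, hQP⟩, ?_⟩
  intro q hq'
  rcases le_total q qstar with hle | hge
  · have := hmono ⟨hq'.1, hle⟩ ⟨hqnn, le_rfl⟩ hle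
    simpa [hf] using this
  · have := hanti ⟨le_rfl, hQP⟩ ⟨hge, hq'.2⟩ hge
    simpa [hf] using this
end
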